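/- Let ω = e^{2πi/3}, let λ_k(z) = (ω^k z + 1/(ω^k z))/√3 for nonzero complex z, and for i, j ∈ {1,2,3} let h_{ij}(z) = λ_j(z)/(3λ_i(z)² − 1). Then: (a) z · h_{ij}(z) tends to ω^{j−2i}/√3 as |z| → ∞; (b) h_{ij}(z)/z tends to ω^{2i−j}/√3 as z → 0 with z ≠ 0; (c) if i ∈ {1,2}, then there exists a nonzero complex number L such that (z − 1) · h_{ij}(z) tends to L as z → 1 with z ≠ 1 (i.e., h_{ij} has a simple pole at z = 1 for i ≠ 3). -/

import Mathlib

open Filter Topology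

/-- The primitive cube root of unity `ω = e^{2πi/3}`. -/
noncomputable def ωc : ℂ := Complex.exp (2 * Real.pi * Complex.I / 3)

/-- The eigenvalue branches `λ_j(z) = (ω^j z + 1/(ω^j z))/√3`. -/
noncomputable def lamN (j : ℕ) (z : ℂ) : ℂ :=
  (ωc ^ j * z + 1 / (ωc ^ j * z)) / (Real.sqrt 3 : ℂ)

/-- The singular entries `h_{ij}(z) = λ_j(z)/(3λ_i(z)² − 1)` of the matrix `U`. -/
noncomputable def hij (i j : ℕ) (z : ℂ) : ℂ :=
  lamN j z / (3 * (lamN i z) ^ 2 - 1)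

lemma omega_ne_zero : ωc ≠ 0 := Complex.exp_ne_zero _

lemma sqrt3_ne : ((Real.sqrt 3 : ℝ) : ℂ) ≠ 0 := by
  norm_cast
  positivity

lemma sqrt3_sq : ((Real.sqrt 3 : ℝ) : ℂ) ^ 2 = 3 := by
  norm_cast
  rw [Real.sq_sqrt] <;> norm_num

lemma omega_cube : ωc ^ 3 = 1 := by
  rw [ωc, ← Complex.exp_nat_mul]
  rw [show ((3 : ℕ) : ℂ) * (2 * (Real.pi : ℂ) * Complex.I / 3) = 2 * (Real.pi : ℂ) * Complex.I by
    push_cast; ring]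
  exact Complex.exp_two_pi_mul_I

lemma omega_im_pos : 0 < ωc.im := by
  have h : ωc = Complex.exp ((2 * Real.pi / 3 : ℝ) * Complex.I) := by
    rw [ωc]; push_cast; ring_nf
  rw [h, Complex.exp_ofReal_mul_I_im]
  exact Real.sin_pos_of_pos_of_lt_pi (by positivity) (by nlinarith [Real.pi_pos])

lemma omega_ne_one : ωc ≠ 1 := by
  intro h
  have := omega_im_pos
  rw [h] at this
  simp at this

lemma omega_sum : ωc ^ 2 + ωc + 1 = 0 := by
  have h3 := omega_cube
  have : (ωc - 1) * (ωc ^ 2 + ωc + 1) = 0 := by linear_combination h3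
  rcases mul_eq_zero.mp this with h | h
  · exact absurd (sub_eq_zero.mp h) omega_ne_one
  · exact h

lemma omega_sq_ne_one : ωc ^ 2 ≠ 1 := by
  intro h
  apply omega_ne_one
  calc ωc = ωc ^ 4 := by rw [show (4 : ℕ) = 3 + 1 from rfl, pow_succ, omega_cube, one_mul]
  _ = (ωc ^ 2) ^ 2 := by ring
  _ = 1 := by rw [h]; ring

lemma key_formula (u v s : ℂ) (hu : u ≠ 0) (hv : v ≠ 0) (hs : s ≠ 0) (hs2 : s ^ 2 = 3) :
    ((v + 1 / v) / s) / (3 * ((u + 1 / u) / s) ^ 2 - 1)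
      = (v ^ 2 + 1) * u ^ 2 / (s * v * (u ^ 4 + u ^ 2 + 1)) := by
  have hden : 3 * ((u + 1 / u) / s) ^ 2 - 1 = (u ^ 4 + u ^ 2 + 1) / u ^ 2 := by
    rw [div_pow, hs2]
    field_simp
    ring
  have hnum : (v + 1 / v) / s = (v ^ 2 + 1) / (s * v) := by
    field_simp
  rw [hnum, hden, div_div_eq_mul_div, div_mul_eq_mul_div, div_div]

lemma hij_formula (i j : ℕ) (z : ℂ) (hz : z ≠ 0) :
    hij i j z = ((ωc ^ j * z) ^ 2 + 1) * (ωc ^ i * z) ^ 2 /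
      ((Real.sqrt 3 : ℂ) * (ωc ^ j * z) * ((ωc ^ i * z) ^ 4 + (ωc ^ i * z) ^ 2 + 1)) := by
  have hu : ωc ^ i * z ≠ 0 := mul_ne_zero (pow_ne_zero _ omega_ne_zero) hz
  have hv : ωc ^ j * z ≠ 0 := mul_ne_zero (pow_ne_zero _ omega_ne_zero) hz
  simp only [hij, lamN]
  exact key_formula _ _ _ hu hv sqrt3_ne sqrt3_sq

lemma part_a (i j : ℕ) :
    Filter.Tendsto (fun z : ℂ => z * hij i j z)
      (Filter.comap (fun z : ℂ => ‖z‖) Filter.atTop)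
      (nhds (ωc ^ ((j : ℤ) - 2 * (i : ℤ)) / (Real.sqrt 3 : ℂ))) := by
  set s : ℂ := (Real.sqrt 3 : ℂ) with hs_def
  have hs : s ≠ 0 := sqrt3_ne
  have ha : (ωc ^ i : ℂ) ≠ 0 := pow_ne_zero _ omega_ne_zero
  have hb : (ωc ^ j : ℂ) ≠ 0 := pow_ne_zero _ omega_ne_zero
  set G : ℂ → ℂ := fun w =>
    ((ωc ^ j) ^ 2 + w ^ 2) * (ωc ^ i) ^ 2 /
      (s * ωc ^ j * ((ωc ^ i) ^ 4 + (ωc ^ i) ^ 2 * w ^ 2 + w ^ 4)) with hG_def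
  have hden0 : s * ωc ^ j * ((ωc ^ i) ^ 4 + (ωc ^ i) ^ 2 * (0:ℂ) ^ 2 + (0:ℂ) ^ 4) ≠ 0 := by
    simp only [ne_eq, mul_eq_zero]
    push_neg
    refine ⟨⟨hs, hb⟩, ?_⟩
    simpa using pow_ne_zero 4 ha
  have hcont : ContinuousAt G 0 := ContinuousAt.div (by fun_prop) (by fun_prop) hden0
  have hkey : ωc ^ ((j : ℤ) - 2 * (i : ℤ)) * (ωc ^ i) ^ 2 = ωc ^ j := by
    rw [← pow_mul, ← zpow_natCast ωc (i * 2), ← zpow_natCast ωc j,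
      ← zpow_add₀ omega_ne_zero]
    congr 1
    push_cast
    ring
  have hG0 : G 0 = ωc ^ ((j : ℤ) - 2 * (i : ℤ)) / s := by
    rw [hG_def]
    simp only
    rw [div_eq_div_iff hden0 hs]
    linear_combination (-(s * ωc ^ j * (ωc ^ i) ^ 2)) * hkey
  have hinv : Filter.Tendsto (fun z : ℂ => z⁻¹)
      (Filter.comap (fun z : ℂ => ‖z‖) Filter.atTop) (nhds 0) := by
    rw [tendsto_zero_iff_norm_tendsto_zero]
    have h1 : Filter.Tendsto (fun z : ℂ => (‖z‖)⁻¹)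
        (Filter.comap (fun z : ℂ => ‖z‖) Filter.atTop) (nhds 0) :=
      tendsto_inv_atTop_zero.comp tendsto_comap
    simpa [norm_inv] using h1
  have hne : ∀ᶠ z : ℂ in Filter.comap (fun z : ℂ => ‖z‖) Filter.atTop, z ≠ 0 := by
    have h1 : ∀ᶠ z : ℂ in Filter.comap (fun z : ℂ => ‖z‖) Filter.atTop,
        1 ≤ ‖z‖ := tendsto_comap.eventually (Filter.eventually_ge_atTop 1)
    filter_upwards [h1] with z hz h0
    rw [h0] at hz
    norm_num at hz
  have hTend : Filter.Tendsto (fun z : ℂ => G z⁻¹)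
      (Filter.comap (fun z : ℂ => ‖z‖) Filter.atTop) (nhds (G 0)) :=
    (hcont.tendsto).comp hinv
  rw [hG0] at hTend
  refine hTend.congr' ?_
  filter_upwards [hne] with z hz
  rw [hij_formula i j z hz]
  have hQrel : (ωc ^ i) ^ 4 + (ωc ^ i) ^ 2 * (z⁻¹) ^ 2 + (z⁻¹) ^ 4
      = ((ωc ^ i * z) ^ 4 + (ωc ^ i * z) ^ 2 + 1) * (z⁻¹) ^ 4 := by
    field_simp
  rw [hG_def]
  simp only
  rw [hQrel]
  by_cases hQ : (ωc ^ i * z) ^ 4 + (ωc ^ i * z) ^ 2 + 1 = 0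
  · simp [hQ]
  · field_simp [hs, hb, ha, hz, hQ]
    ring

lemma part_b (i j : ℕ) :
    Filter.Tendsto (fun z : ℂ => hij i j z / z) (nhdsWithin 0 {(0 : ℂ)}ᶜ)
      (nhds (ωc ^ (2 * (i : ℤ) - (j : ℤ)) / (Real.sqrt 3 : ℂ))) := by
  set s : ℂ := (Real.sqrt 3 : ℂ) with hs_def
  have hs : s ≠ 0 := sqrt3_ne
  have ha : (ωc ^ i : ℂ) ≠ 0 := pow_ne_zero _ omega_ne_zero
  have hb : (ωc ^ j : ℂ) ≠ 0 := pow_ne_zero _ omega_ne_zero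
  set g : ℂ → ℂ := fun z =>
    ((ωc ^ j) ^ 2 * z ^ 2 + 1) * (ωc ^ i) ^ 2 /
      (s * ωc ^ j * ((ωc ^ i) ^ 4 * z ^ 4 + (ωc ^ i) ^ 2 * z ^ 2 + 1)) with hg_def
  have hden0 : s * ωc ^ j * ((ωc ^ i) ^ 4 * (0:ℂ) ^ 4 + (ωc ^ i) ^ 2 * (0:ℂ) ^ 2 + 1) ≠ 0 := by
    simp only [ne_eq, mul_eq_zero]
    push_neg
    refine ⟨⟨hs, hb⟩, ?_⟩
    norm_num
  have hcont : ContinuousAt g 0 := ContinuousAt.div (by fun_prop) (by fun_prop) hden0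
  have hkey : ωc ^ (2 * (i : ℤ) - (j : ℤ)) * ωc ^ j = (ωc ^ i) ^ 2 := by
    rw [← pow_mul, ← zpow_natCast ωc (i * 2), ← zpow_natCast ωc j,
      ← zpow_add₀ omega_ne_zero]
    congr 1
    push_cast
    ring
  have hg0 : g 0 = ωc ^ (2 * (i : ℤ) - (j : ℤ)) / s := by
    rw [hg_def]
    simp only
    rw [div_eq_div_iff hden0 hs]
    linear_combination (-s) * hkey
  have hTend : Filter.Tendsto g (nhdsWithin 0 {(0 : ℂ)}ᶜ) (nhds (g 0)) :=
    (hcont.tendsto).mono_left nhdsWithin_le_nhds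
  rw [hg0] at hTend
  refine hTend.congr' ?_
  filter_upwards [self_mem_nhdsWithin] with z hz
  have hz0 : z ≠ 0 := hz
  rw [hij_formula i j z hz0, hg_def]
  simp only
  have hQrel : ((ωc ^ i * z) ^ 4 + (ωc ^ i * z) ^ 2 + 1)
      = (ωc ^ i) ^ 4 * z ^ 4 + (ωc ^ i) ^ 2 * z ^ 2 + 1 := by ring
  by_cases hQ : (ωc ^ i) ^ 4 * z ^ 4 + (ωc ^ i) ^ 2 * z ^ 2 + 1 = 0
  · rw [hQrel, hQ]
    simp
  · have hD1 : (Real.sqrt 3 : ℂ) * (ωc ^ j * z) *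
        ((ωc ^ i) ^ 4 * z ^ 4 + (ωc ^ i) ^ 2 * z ^ 2 + 1) * z ≠ 0 :=
      mul_ne_zero (mul_ne_zero (mul_ne_zero hs (mul_ne_zero hb hz0)) hQ) hz0
    have hD2 : s * ωc ^ j * ((ωc ^ i) ^ 4 * z ^ 4 + (ωc ^ i) ^ 2 * z ^ 2 + 1) ≠ 0 :=
      mul_ne_zero (mul_ne_zero hs hb) hQ
    rw [hQrel, div_div, div_eq_div_iff hD2 hD1]
    ring

lemma part_c (i j : ℕ) (hA : ((ωc ^ i : ℂ)) ^ 4 + (ωc ^ i) ^ 2 + 1 = 0)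
    (hA1 : ((ωc ^ i : ℂ)) ^ 4 ≠ 1) :
    ∃ L : ℂ, L ≠ 0 ∧
      Filter.Tendsto (fun z : ℂ => (z - 1) * hij i j z) (nhdsWithin 1 {(1 : ℂ)}ᶜ)
        (nhds L) := by
  set s : ℂ := (Real.sqrt 3 : ℂ) with hs_def
  have hs : s ≠ 0 := sqrt3_ne
  have ha : (ωc ^ i : ℂ) ≠ 0 := pow_ne_zero _ omega_ne_zero
  have hb : (ωc ^ j : ℂ) ≠ 0 := pow_ne_zero _ omega_ne_zero
  have hb3 : ((ωc ^ j : ℂ)) ^ 3 = 1 := by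
    rw [← pow_mul, mul_comm, pow_mul, omega_cube, one_pow]
  have hb21 : ((ωc ^ j : ℂ)) ^ 2 + 1 ≠ 0 := by
    intro h
    have h2 : ((ωc ^ j : ℂ)) ^ 2 = -1 := by linear_combination h
    have h3 : (((ωc ^ j : ℂ)) ^ 2) ^ 3 = 1 := by
      rw [← pow_mul, mul_comm, pow_mul, hb3, one_pow]
    rw [h2] at h3
    norm_num at h3
  have hR1 : ((ωc ^ i : ℂ)) ^ 4 * 1 ^ 3 + (ωc ^ i) ^ 4 * 1 ^ 2 - 1 - 1 ≠ 0 := by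
    intro h
    apply hA1
    linear_combination h / 2
  set g : ℂ → ℂ := fun z =>
    ((ωc ^ j) ^ 2 * z ^ 2 + 1) * (ωc ^ i) ^ 2 * z ^ 2 /
      (s * ωc ^ j * z * ((ωc ^ i) ^ 4 * z ^ 3 + (ωc ^ i) ^ 4 * z ^ 2 - z - 1)) with hg_def
  have hden1 : s * ωc ^ j * (1:ℂ) *
      ((ωc ^ i) ^ 4 * (1:ℂ) ^ 3 + (ωc ^ i) ^ 4 * (1:ℂ) ^ 2 - 1 - 1) ≠ 0 := by
    exact mul_ne_zero (mul_ne_zero (mul_ne_zero hs hb) one_ne_zero) hR1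
  have hnum1 : ((ωc ^ j : ℂ)) ^ 2 * (1:ℂ) ^ 2 + 1 ≠ 0 := by simpa using hb21
  refine ⟨g 1, ?_, ?_⟩
  · rw [hg_def]
    simp only
    exact div_ne_zero (mul_ne_zero (mul_ne_zero hnum1 (pow_ne_zero _ ha)) (by norm_num : ((1:ℂ)) ^ 2 ≠ 0)) hden1
  · have hcont : ContinuousAt g 1 := ContinuousAt.div (by fun_prop) (by fun_prop) hden1
    have hTend : Filter.Tendsto g (nhdsWithin 1 {(1 : ℂ)}ᶜ) (nhds (g 1)) :=
      (hcont.tendsto).mono_left nhdsWithin_le_nhds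
    refine hTend.congr' ?_
    have h0 : ∀ᶠ z : ℂ in nhdsWithin 1 {(1 : ℂ)}ᶜ, z ≠ 0 :=
      Filter.Eventually.filter_mono nhdsWithin_le_nhds
        (eventually_ne_nhds (by norm_num : (1 : ℂ) ≠ 0))
    filter_upwards [self_mem_nhdsWithin, h0] with z hz1' hz0
    have hz1 : z ≠ 1 := hz1'
    rw [hij_formula i j z hz0, hg_def]
    simp only
    have hQfact : (ωc ^ i * z) ^ 4 + (ωc ^ i * z) ^ 2 + 1
        = (z - 1) * ((ωc ^ i) ^ 4 * z ^ 3 + (ωc ^ i) ^ 4 * z ^ 2 - z - 1) := by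
      linear_combination z ^ 2 * hA
    rw [hQfact]
    by_cases hR : (ωc ^ i) ^ 4 * z ^ 3 + (ωc ^ i) ^ 4 * z ^ 2 - z - 1 = 0
    · simp [hR]
    · have hz1' : z - 1 ≠ 0 := sub_ne_zero.mpr hz1
      field_simp [hs, hb, ha, hz0, hz1', hR]
      ring

/-- Behavior of `h_{ij}` at the singularities `z = ∞`, `z = 0` and `z = 1`:
(a) `z h_{ij}(z) → ω^{j−2i}/√3` as `|z| → ∞`; (b) `h_{ij}(z)/z → ω^{2i−j}/√3` as
`z → 0`; (c) for `i ∈ {1,2}`, `(z−1) h_{ij}(z)` has a nonzero limit as `z → 1`,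
i.e. `h_{ij}` has a simple pole at `z = 1`. -/
theorem stmt_12 (i j : ℕ) (hi : i ∈ ({1, 2, 3} : Set ℕ)) (hj : j ∈ ({1, 2, 3} : Set ℕ)) :
    Filter.Tendsto (fun z : ℂ => z * hij i j z)
      (Filter.comap (fun z : ℂ => ‖z‖) Filter.atTop)
      (nhds (ωc ^ ((j : ℤ) - 2 * (i : ℤ)) / (Real.sqrt 3 : ℂ))) ∧
    Filter.Tendsto (fun z : ℂ => hij i j z / z) (nhdsWithin 0 {(0 : ℂ)}ᶜ)
      (nhds (ωc ^ (2 * (i : ℤ) - (j : ℤ)) / (Real.sqrt 3 : ℂ))) ∧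
    (i ∈ ({1, 2} : Set ℕ) →
      ∃ L : ℂ, L ≠ 0 ∧
        Filter.Tendsto (fun z : ℂ => (z - 1) * hij i j z) (nhdsWithin 1 {(1 : ℂ)}ᶜ)
          (nhds L)) := by
  refine ⟨part_a i j, part_b i j, fun hc => ?_⟩
  rcases hc with hc | hc
  · subst hc
    apply part_c
    · linear_combination ωc * omega_cube + omega_sum
    · simp only [pow_one]
      intro h
      apply omega_ne_one
      have h4 : ωc ^ 4 = ωc := by linear_combination ωc * omega_cube
      rw [h4] at h
      exact h
  · simp only [Set.mem_singleton_iff] at hc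
    subst hc
    apply part_c
    · linear_combination (ωc ^ 5 + ωc ^ 2 + ωc) * omega_cube + omega_sum
    · intro h
      apply omega_sq_ne_one
      have h8 : (ωc ^ 2) ^ 4 = ωc ^ 2 := by linear_combination (ωc ^ 5 + ωc ^ 2) * omega_cube
      rw [h8] at h
      exact h
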